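/- arXiv:2003.08161 — 3 statements merged into one kernel-verified Lean document; each statement's English description precedes it below -/
import Mathlib

section
/- The speed function v is non-decreasing in each coordinate on T: for all ρ, ρ' ∈ T with ρ₁ ≤ ρ'₁ and ρ₂ ≤ ρ'₂, one has v(ρ) ≤ v(ρ'). -/
open Real

/-- The speed function of the Borodin-Ferrari dynamics, with the convention `v (0,0) = 0`. -/
noncomputable def speed (ρ : ℝ × ℝ) : ℝ :=
  if ρ = (0, 0) then 0
  else (1 / π) * (Real.sin (π * ρ.1) * Real.sin (π * ρ.2) / Real.sin (π * (ρ.1 + ρ.2)))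

/-- The triangle `T` on which the speed function is defined. -/
def T : Set (ℝ × ℝ) := {ρ | 0 ≤ ρ.1 ∧ 0 ≤ ρ.2 ∧ ρ.1 + ρ.2 < 1}

/-- Cotangent is antitone on `(0, π)`. -/
lemma cot_antitone {x y : ℝ} (hx : 0 < x) (hy : y < π) (hxy : x ≤ y) :
    Real.cot y ≤ Real.cot x := by
  have hsx : 0 < Real.sin x := Real.sin_pos_of_pos_of_lt_pi hx (lt_of_le_of_lt hxy hy)
  have hsy : 0 < Real.sin y := Real.sin_pos_of_pos_of_lt_pi (lt_of_lt_of_le hx hxy) hy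
  have key : Real.cot x - Real.cot y = Real.sin (y - x) / (Real.sin x * Real.sin y) := by
    rw [Real.cot_eq_cos_div_sin, Real.cot_eq_cos_div_sin, Real.sin_sub]
    field_simp
  have hsub : 0 ≤ Real.sin (y - x) := by
    apply Real.sin_nonneg_of_nonneg_of_le_pi (by linarith)
    have : 0 < y := lt_of_lt_of_le hx hxy
    linarith
  nlinarith [div_nonneg hsub (le_of_lt (mul_pos hsx hsy))]

/-- Identity: `sin A * sin B / sin (A + B) = 1 / (cot A + cot B)` when sines are nonzero. -/
lemma sin_div_eq_cot {A B : ℝ} (hA : Real.sin A ≠ 0) (hB : Real.sin B ≠ 0) :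
    Real.sin A * Real.sin B / Real.sin (A + B) = 1 / (Real.cot A + Real.cot B) := by
  rw [Real.cot_eq_cos_div_sin, Real.cot_eq_cos_div_sin, Real.sin_add]
  rw [div_add_div _ _ hA hB]
  rw [one_div, div_eq_mul_inv, inv_div]
  rw [div_eq_mul_inv, mul_comm (Real.sin A) (Real.sin B), add_comm (Real.sin A * Real.cos B)]

/-- speed is nonnegative on T. -/
lemma speed_nonneg (ρ : ℝ × ℝ) (hρ : ρ ∈ T) : 0 ≤ speed ρ := by
  obtain ⟨h1, h2, h3⟩ := hρ
  unfold speed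
  split
  · exact le_refl 0
  · rename_i hne
    have hsum : 0 < ρ.1 + ρ.2 := by
      rcases lt_or_eq_of_le h1 with h | h
      · linarith
      · rcases lt_or_eq_of_le h2 with h' | h'
        · linarith
        · exfalso; exact hne (Prod.ext h.symm h'.symm)
    have hπ := Real.pi_pos
    have hd : 0 < Real.sin (π * (ρ.1 + ρ.2)) := by
      apply Real.sin_pos_of_pos_of_lt_pi (by positivity)
      nlinarith
    have hn1 : 0 ≤ Real.sin (π * ρ.1) := by
      apply Real.sin_nonneg_of_nonneg_of_le_pi (by positivity)
      nlinarith
    have hn2 : 0 ≤ Real.sin (π * ρ.2) := by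
      apply Real.sin_nonneg_of_nonneg_of_le_pi (by positivity)
      nlinarith
    positivity

lemma speed_eq_cot (ρ : ℝ × ℝ) (hρ : ρ ∈ T) (h1 : 0 < ρ.1) (h2 : 0 < ρ.2) :
    speed ρ = (1 / π) * (1 / (Real.cot (π * ρ.1) + Real.cot (π * ρ.2))) := by
  obtain ⟨_, _, h3⟩ := hρ
  have hπ := Real.pi_pos
  have hne : ρ ≠ (0, 0) := by
    intro h; rw [h] at h1; simp at h1
  have hsA : Real.sin (π * ρ.1) ≠ 0 := by
    apply ne_of_gt; apply Real.sin_pos_of_pos_of_lt_pi (by positivity); nlinarith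
  have hsB : Real.sin (π * ρ.2) ≠ 0 := by
    apply ne_of_gt; apply Real.sin_pos_of_pos_of_lt_pi (by positivity); nlinarith
  rw [speed, if_neg hne, show π * (ρ.1 + ρ.2) = π * ρ.1 + π * ρ.2 by ring,
    sin_div_eq_cot hsA hsB]

lemma cot_sum_pos (ρ : ℝ × ℝ) (hρ : ρ ∈ T) (h1 : 0 < ρ.1) (h2 : 0 < ρ.2) :
    0 < Real.cot (π * ρ.1) + Real.cot (π * ρ.2) := by
  obtain ⟨_, _, h3⟩ := hρ
  have hπ := Real.pi_pos
  have hsA : 0 < Real.sin (π * ρ.1) := by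
    apply Real.sin_pos_of_pos_of_lt_pi (by positivity); nlinarith
  have hsB : 0 < Real.sin (π * ρ.2) := by
    apply Real.sin_pos_of_pos_of_lt_pi (by positivity); nlinarith
  have hsum : 0 < Real.sin (π * ρ.1 + π * ρ.2) := by
    apply Real.sin_pos_of_pos_of_lt_pi (by positivity); nlinarith
  have key : Real.cot (π * ρ.1) + Real.cot (π * ρ.2)
      = Real.sin (π * ρ.1 + π * ρ.2) / (Real.sin (π * ρ.1) * Real.sin (π * ρ.2)) := by
    rw [Real.cot_eq_cos_div_sin, Real.cot_eq_cos_div_sin, Real.sin_add]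
    field_simp
    ring
  rw [key]
  positivity

/-- The speed function is non-decreasing in each coordinate on `T`. -/
theorem stmt3 (ρ ρ' : ℝ × ℝ) (hρ : ρ ∈ T) (hρ' : ρ' ∈ T)
    (h1 : ρ.1 ≤ ρ'.1) (h2 : ρ.2 ≤ ρ'.2) :
    speed ρ ≤ speed ρ' := by
  obtain ⟨ha1, ha2, ha3⟩ := hρ
  obtain ⟨hb1, hb2, hb3⟩ := hρ'
  have hπ := Real.pi_pos
  -- degenerate cases: a zero coordinate of ρ makes speed ρ = 0
  rcases eq_or_lt_of_le ha1 with hz1 | hp1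
  · have : speed ρ = 0 := by
      unfold speed
      split
      · rfl
      · rw [← hz1, mul_zero, Real.sin_zero, zero_mul, zero_div, mul_zero]
    rw [this]; exact speed_nonneg ρ' ⟨hb1, hb2, hb3⟩
  rcases eq_or_lt_of_le ha2 with hz2 | hp2
  · have : speed ρ = 0 := by
      unfold speed
      split
      · rfl
      · rw [← hz2, mul_zero, Real.sin_zero, mul_zero, zero_div, mul_zero]
    rw [this]; exact speed_nonneg ρ' ⟨hb1, hb2, hb3⟩
  -- now both coordinates of ρ (hence ρ') are positive
  have hp1' : 0 < ρ'.1 := lt_of_lt_of_le hp1 h1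
  have hp2' : 0 < ρ'.2 := lt_of_lt_of_le hp2 h2
  rw [speed_eq_cot ρ ⟨ha1, ha2, ha3⟩ hp1 hp2,
      speed_eq_cot ρ' ⟨hb1, hb2, hb3⟩ hp1' hp2']
  have hS := cot_sum_pos ρ ⟨ha1, ha2, ha3⟩ hp1 hp2
  have hS' := cot_sum_pos ρ' ⟨hb1, hb2, hb3⟩ hp1' hp2'
  have hc1 : Real.cot (π * ρ'.1) ≤ Real.cot (π * ρ.1) := by
    apply cot_antitone (by positivity) (by nlinarith) (by nlinarith)
  have hc2 : Real.cot (π * ρ'.2) ≤ Real.cot (π * ρ.2) := by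
    apply cot_antitone (by positivity) (by nlinarith) (by nlinarith)
  have hle : Real.cot (π * ρ'.1) + Real.cot (π * ρ'.2)
      ≤ Real.cot (π * ρ.1) + Real.cot (π * ρ.2) := by linarith
  have := one_div_le_one_div_of_le hS' hle
  have h1π : 0 < 1 / π := by positivity
  nlinarith
end

section
/- At every point ρ = (ρ₁,ρ₂) with ρ₁ > 0, ρ₂ > 0 and ρ₁+ρ₂ < 1 (i.e. in the interior of T), the speed function v is twice differentiable and the determinant of its Hessian is strictly negative: ∂²₁₁v(ρ)·∂²₂₂v(ρ) − (∂²₁₂v(ρ))² < 0. -/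
/-!
The speed is `sin (πx) sin (πy) / (π sin (π (x + y)))`, symmetric in `x, y`; where
`sin (π (x + y)) ≠ 0` its first partials are `sin² (πy) / sin² (π (x + y))` and
`sin² (πx) / sin² (π (x + y))`. Differentiating once more and using `cos² = 1 - sin²`, the Hessian
determinant collapses to the negative square `-(2π sin (πx) sin (πy) / sin² (π (x + y)))²`, which
is nonzero inside the triangle.
-/

open Real

/-- Partial derivative in the first coordinate of a function on `ℝ²`. -/
noncomputable def pd1 (f : ℝ × ℝ → ℝ) (ρ : ℝ × ℝ) : ℝ :=
  deriv (fun s => f (s, ρ.2)) ρ.1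

/-- Partial derivative in the second coordinate of a function on `ℝ²`. -/
noncomputable def pd2 (f : ℝ × ℝ → ℝ) (ρ : ℝ × ℝ) : ℝ :=
  deriv (fun s => f (ρ.1, s)) ρ.2

open Filter Topology

lemma pd2_eq_pd1_comp_swap (f : ℝ × ℝ → ℝ) (ρ : ℝ × ℝ) :
    pd2 f ρ = pd1 (f ∘ Prod.swap) ρ.swap :=
  rfl

lemma pd1_eq_of_eventuallyEq {f : ℝ × ℝ → ℝ} {g : ℝ → ℝ} {x y g' : ℝ}
    (hfg : ∀ᶠ s in 𝓝 x, f (s, y) = g s) (hg : HasDerivAt g g' x) : pd1 f (x, y) = g' :=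
  (hg.congr_of_eventuallyEq hfg).deriv

lemma speed_eq : speed = fun ρ : ℝ × ℝ =>
    (1 / π) * (sin (π * ρ.1) * sin (π * ρ.2) / sin (π * (ρ.1 + ρ.2))) := by
  funext ρ
  unfold speed
  split_ifs with h
  · simp [h]
  · rfl

lemma speed_comp_swap : speed ∘ Prod.swap = speed := by
  funext ρ
  simp only [speed_eq, Function.comp_apply, Prod.fst_swap, Prod.snd_swap, add_comm, mul_comm]

lemma sin_pi_mul_pos {t : ℝ} (h0 : 0 < t) (h1 : t < 1) : 0 < sin (π * t) :=
  sin_pos_of_pos_of_lt_pi (by positivity) (by nlinarith [pi_pos])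

lemma eventually_sin_pi_mul_add_ne_zero {x y : ℝ} (h : sin (π * (x + y)) ≠ 0) :
    ∀ᶠ s in 𝓝 x, sin (π * (s + y)) ≠ 0 :=
  ContinuousAt.eventually_ne (by fun_prop) h

lemma hasDerivAt_sin_pi_mul_add (y x : ℝ) :
    HasDerivAt (fun s => sin (π * (s + y))) (π * cos (π * (x + y))) x := by
  simpa [mul_comm] using (((hasDerivAt_id x).add_const y).const_mul π).sin

-- The quotient rule's numerator is `π sin (πy)` by `sin (a + b) cos a - cos (a + b) sin a = sin b`.
lemma hasDerivAt_sin_pi_mul_div (y x : ℝ) (h : sin (π * (x + y)) ≠ 0) :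
    HasDerivAt (fun s => sin (π * s) / sin (π * (s + y)))
      (π * sin (π * y) / sin (π * (x + y)) ^ 2) x := by
  have hnum : HasDerivAt (fun s => sin (π * s)) (π * cos (π * x)) x := by
    simpa [mul_comm] using ((hasDerivAt_id x).const_mul π).sin
  refine (hnum.div (hasDerivAt_sin_pi_mul_add y x) h).congr_deriv ?_
  have hsin : sin (π * y) = sin (π * (x + y)) * cos (π * x) - cos (π * (x + y)) * sin (π * x) := by
    rw [← sin_sub]; ring_nf
  rw [hsin]; ring

lemma hasDerivAt_speed_fst (x y : ℝ) (h : sin (π * (x + y)) ≠ 0) :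
    HasDerivAt (fun s => speed (s, y)) (sin (π * y) ^ 2 / sin (π * (x + y)) ^ 2) x := by
  refine ((hasDerivAt_sin_pi_mul_div y x h).const_mul (sin (π * y) / π)).congr_of_eventuallyEq
    ?_ |>.congr_deriv ?_
  · filter_upwards with s
    simp only [speed_eq]; ring
  · field_simp [pi_ne_zero]

lemma pd1_speed {x y : ℝ} (h : sin (π * (x + y)) ≠ 0) :
    pd1 speed (x, y) = sin (π * y) ^ 2 / sin (π * (x + y)) ^ 2 :=
  (hasDerivAt_speed_fst x y h).deriv

lemma pd2_speed_eq : pd2 speed = pd1 speed ∘ Prod.swap := by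
  funext ρ
  rw [pd2_eq_pd1_comp_swap, speed_comp_swap, Function.comp_apply]

lemma pd2_speed {x y : ℝ} (h : sin (π * (x + y)) ≠ 0) :
    pd2 speed (x, y) = sin (π * x) ^ 2 / sin (π * (x + y)) ^ 2 := by
  rw [pd2_speed_eq, Function.comp_apply, Prod.swap_prod_mk, add_comm, pd1_speed (by rwa [add_comm])]

lemma pd1_pd1_speed {x y : ℝ} (h : sin (π * (x + y)) ≠ 0) :
    pd1 (pd1 speed) (x, y) =
      -2 * π * sin (π * y) ^ 2 * cos (π * (x + y)) / sin (π * (x + y)) ^ 3 := by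
  refine pd1_eq_of_eventuallyEq (g := fun s => sin (π * y) ^ 2 / sin (π * (s + y)) ^ 2) ?_ ?_
  · filter_upwards [eventually_sin_pi_mul_add_ne_zero h] with s hs using pd1_speed hs
  · refine ((hasDerivAt_const x _).div ((hasDerivAt_sin_pi_mul_add y x).fun_pow 2)
      (pow_ne_zero 2 h)).congr_deriv ?_
    field_simp; ring

lemma pd2_pd2_speed {x y : ℝ} (h : sin (π * (x + y)) ≠ 0) :
    pd2 (pd2 speed) (x, y) =
      -2 * π * sin (π * x) ^ 2 * cos (π * (x + y)) / sin (π * (x + y)) ^ 3 := by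
  rw [pd2_eq_pd1_comp_swap, pd2_speed_eq, Function.comp_assoc, Prod.swap_swap_eq,
    Function.comp_id, Prod.swap_prod_mk, pd1_pd1_speed (by rwa [add_comm]), add_comm]

lemma pd1_pd2_speed {x y : ℝ} (h : sin (π * (x + y)) ≠ 0) :
    pd1 (pd2 speed) (x, y) = 2 * π * sin (π * x) * sin (π * y) / sin (π * (x + y)) ^ 3 := by
  refine pd1_eq_of_eventuallyEq (g := fun s => (sin (π * s) / sin (π * (s + y))) ^ 2) ?_ ?_
  · filter_upwards [eventually_sin_pi_mul_add_ne_zero h] with s hs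
    rw [pd2_speed hs, div_pow]
  · refine ((hasDerivAt_sin_pi_mul_div y x h).fun_pow 2).congr_deriv ?_
    push_cast
    field_simp

lemma hessian_det_speed {x y : ℝ} (h : sin (π * (x + y)) ≠ 0) :
    pd1 (pd1 speed) (x, y) * pd2 (pd2 speed) (x, y) - pd1 (pd2 speed) (x, y) ^ 2 =
      -(2 * π * sin (π * x) * sin (π * y) / sin (π * (x + y)) ^ 2) ^ 2 := by
  rw [pd1_pd1_speed h, pd2_pd2_speed h, pd1_pd2_speed h]
  field_simp
  linear_combination (sin (π * x) ^ 2 * sin (π * y) ^ 2) * sin_sq_add_cos_sq (π * (x + y))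

lemma contDiffAt_speed {ρ : ℝ × ℝ} (h : sin (π * (ρ.1 + ρ.2)) ≠ 0) : ContDiffAt ℝ 2 speed ρ := by
  rw [speed_eq]
  fun_prop (disch := exact h)

/-- In the interior of `T`, the speed function is twice differentiable and the
determinant of its Hessian is strictly negative (AKPZ class). -/
theorem stmt5 (ρ : ℝ × ℝ) (h1 : 0 < ρ.1) (h2 : 0 < ρ.2) (h3 : ρ.1 + ρ.2 < 1) :
    ContDiffAt ℝ 2 speed ρ ∧
    pd1 (pd1 speed) ρ * pd2 (pd2 speed) ρ - (pd1 (pd2 speed) ρ) ^ 2 < 0 := by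
  obtain ⟨x, y⟩ := ρ
  have hx := sin_pi_mul_pos h1 (by linarith)
  have hy := sin_pi_mul_pos h2 (by linarith)
  have hxy := (sin_pi_mul_pos (add_pos h1 h2) h3).ne'
  refine ⟨contDiffAt_speed hxy, ?_⟩
  rw [hessian_det_speed hxy, neg_lt_zero]
  have := pi_pos
  positivity
end

section
/- For every fixed ρ_v ∈ (−1,1), the map g(ρ_h) := ρ_h + v̂(ρ_h, ρ_v) is strictly increasing on the interval [|ρ_v|, 1) and is a bijection from [|ρ_v|, 1) onto [|ρ_v|, +∞). -/
open Real

/-- The speed function in the rotated coordinates `ρ_h = ρ₁+ρ₂`, `ρ_v = ρ₁-ρ₂`. -/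
noncomputable def speedHat (ρh ρv : ℝ) : ℝ := speed ((ρh + ρv) / 2, (ρh - ρv) / 2)

/-! With `c = cos (π ρv) = cos (π |ρv|)`, the speed is
`v̂ (x, ρv) = (c - cos (π x)) / (2π sin (π x))`, whose `x`-derivative
`(1 - c cos (π x)) / (2 sin² (π x))` is nonnegative; hence `g x = x + v̂ (x, ρv)` has
derivative `≥ 1`. Moreover `g |ρv| = |ρv|`, and `g x → ∞` as `x → 1⁻` because `c > -1`, so the
intermediate value theorem gives surjectivity onto `[|ρv|, ∞)`. -/

open Set Filter Topology

theorem ContinuousOn.surjOn_Ici_of_tendsto_nhdsLT {α δ : Type*}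
    [ConditionallyCompleteLinearOrder α] [TopologicalSpace α] [OrderTopology α] [DenselyOrdered α]
    [LinearOrder δ] [TopologicalSpace δ] [OrderClosedTopology δ] {f : α → δ} {a b : α} (hab : a < b)
    (hf : ContinuousOn f (Ico a b)) (htop : Tendsto f (𝓝[<] b) atTop) :
    SurjOn f (Ico a b) (Ici (f a)) := by
  intro y hy
  have := nhdsLT_neBot_of_exists_lt ⟨a, hab⟩
  obtain ⟨t, hyt, ht⟩ :=
    ((htop.eventually_ge_atTop y).and (Ioo_mem_nhdsLT hab)).exists
  exact hf.surjOn_Icc (left_mem_Ico.2 hab) (Ioo_subset_Ico_self ht) ⟨hy, hyt⟩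

namespace Real

/-- Holds for every `θ`: where `sin θ = 0`, both sides are `0` (with `x / 0 = 0`). -/
theorem tan_half_eq_one_sub_cos_div_sin (θ : ℝ) : tan (θ / 2) = (1 - cos θ) / sin θ := by
  obtain ⟨h, rfl⟩ : ∃ h, θ = 2 * h := ⟨θ / 2, by ring⟩
  rw [mul_div_cancel_left₀ h two_ne_zero, cos_two_mul', sin_two_mul, tan_eq_sin_div_cos]
  by_cases hs : sin h = 0
  · simp [hs]
  · rw [← mul_div_mul_left (sin h) (cos h) (mul_ne_zero two_ne_zero hs)]
    congr 1
    linear_combination sin_sq_add_cos_sq h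

theorem cos_pi_mul_abs (x : ℝ) : cos (π * |x|) = cos (π * x) := by
  rw [← abs_of_pos pi_pos, ← abs_mul, cos_abs, abs_of_pos pi_pos]

theorem tendsto_sin_pi_mul_nhdsLT_one :
    Tendsto (fun x => sin (π * x)) (𝓝[<] 1) (𝓝[>] 0) := by
  refine tendsto_nhdsWithin_of_tendsto_nhds_of_eventually_within _ ?_ ?_
  · have : Continuous fun x => sin (π * x) := by fun_prop
    simpa using (this.tendsto 1).mono_left nhdsWithin_le_nhds
  · filter_upwards [Ioo_mem_nhdsLT zero_lt_one] with x hx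
    exact sin_pos_of_pos_of_lt_pi (by nlinarith [pi_pos, hx.1]) (by nlinarith [pi_pos, hx.2])

end Real

theorem speedHat_eq (x ρv : ℝ) :
    speedHat x ρv = (cos (π * ρv) - cos (π * x)) / (2 * π * sin (π * x)) := by
  unfold speedHat speed
  split_ifs with h
  · obtain ⟨hx, hv⟩ : x = 0 ∧ ρv = 0 := by
      simp only [Prod.mk.injEq] at h
      constructor <;> linarith
    simp [hx, hv]
  · have hcos : cos (π * ρv) - cos (π * x)
        = 2 * sin (π * ((x + ρv) / 2)) * sin (π * ((x - ρv) / 2)) := by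
      rw [cos_sub_cos, ← neg_neg ((π * ρv - π * x) / 2), sin_neg]
      ring_nf
    rw [hcos, show (x + ρv) / 2 + (x - ρv) / 2 = x by ring]
    field_simp

/-- At `x = |ρv| = 0` the quotient in `speedHat_eq` is `0 / 0`; this form isolates the
singular part as `tan (π x / 2)`, and the remaining term vanishes identically when `ρv = 0`. -/
theorem speedHat_eq_tan_sub (x ρv : ℝ) :
    speedHat x ρv = (tan (π * x / 2) - (1 - cos (π * ρv)) / sin (π * x)) / (2 * π) := by
  rw [speedHat_eq, tan_half_eq_one_sub_cos_div_sin, ← sub_div, mul_comm (2 * π), ← div_div]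
  ring_nf

theorem speedHat_abs_self (ρv : ℝ) : speedHat |ρv| ρv = 0 := by
  rw [speedHat_eq, cos_pi_mul_abs, sub_self, zero_div]

theorem speedHat_nonneg {x ρv : ℝ} (hx : x ∈ Icc |ρv| 1) : 0 ≤ speedHat x ρv := by
  have hπ := pi_pos
  have hv := abs_nonneg ρv
  rw [speedHat_eq, ← cos_pi_mul_abs]
  refine div_nonneg (sub_nonneg.2 ?_) (mul_nonneg (by positivity) ?_)
  · exact cos_le_cos_of_nonneg_of_le_pi (by positivity) (by nlinarith [hx.2])
      (by nlinarith [hx.1])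
  · exact sin_nonneg_of_nonneg_of_le_pi (by nlinarith [hx.1]) (by nlinarith [hx.2])

theorem continuousOn_speedHat (ρv : ℝ) : ContinuousOn (speedHat · ρv) (Ico |ρv| 1) := by
  have hπ := pi_pos
  simp_rw [speedHat_eq_tan_sub]
  refine ContinuousOn.div_const (ContinuousOn.sub ?_ ?_) _
  · refine fun x hx => (continuousAt_tan.2 (cos_pos_of_mem_Ioo ⟨?_, ?_⟩).ne').comp
      (f := fun x : ℝ => π * x / 2) (by fun_prop) |>.continuousWithinAt
    · nlinarith [hx.1, abs_nonneg ρv]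
    · nlinarith [hx.2]
  · by_cases hv : ρv = 0
    · simpa [hv] using continuousOn_const
    · refine continuousOn_const.div (by fun_prop) fun x hx => ?_
      have := abs_pos.2 hv
      exact (sin_pos_of_pos_of_lt_pi (by nlinarith [hx.1]) (by nlinarith [hx.2])).ne'

theorem hasDerivAt_speedHat (ρv : ℝ) {x : ℝ} (hx : sin (π * x) ≠ 0) :
    HasDerivAt (speedHat · ρv)
      ((1 - cos (π * ρv) * cos (π * x)) / (2 * sin (π * x) ^ 2)) x := by
  have hπ := pi_pos.ne'
  have hlin : HasDerivAt (fun y => π * y) π x := by simpa using (hasDerivAt_id x).const_mul π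
  have hnum : HasDerivAt (fun y => cos (π * ρv) - cos (π * y)) (sin (π * x) * π) x := by
    simpa using ((hasDerivAt_cos _).comp x hlin).const_sub (cos (π * ρv))
  have hden : HasDerivAt (fun y => 2 * π * sin (π * y)) (2 * π * (cos (π * x) * π)) x :=
    ((hasDerivAt_sin _).comp x hlin).const_mul (2 * π)
  simp_rw [speedHat_eq]
  refine (hnum.fun_div hden (mul_ne_zero (by positivity) hx)).congr_deriv ?_
  field_simp
  linear_combination sin_sq_add_cos_sq (π * x)

theorem tendsto_speedHat_nhdsLT_one {ρv : ℝ} (hv : |ρv| < 1) :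
    Tendsto (speedHat · ρv) (𝓝[<] 1) atTop := by
  have hπ := pi_pos
  have hc : -1 < cos (π * ρv) := by
    rw [← cos_pi_mul_abs, ← cos_pi]
    exact cos_lt_cos_of_nonneg_of_le_pi (by positivity) le_rfl (by nlinarith)
  have hnum : Tendsto (fun x => (cos (π * ρv) - cos (π * x)) / (2 * π)) (𝓝[<] 1)
      (𝓝 ((cos (π * ρv) + 1) / (2 * π))) := by
    have : Continuous fun x => (cos (π * ρv) - cos (π * x)) / (2 * π) := by fun_prop
    simpa using (this.tendsto 1).mono_left nhdsWithin_le_nhds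
  refine (hnum.pos_mul_atTop (div_pos (by linarith) (by positivity))
    (tendsto_inv_nhdsGT_zero.comp tendsto_sin_pi_mul_nhdsLT_one)).congr fun x => ?_
  simp only [Function.comp, speedHat_eq]
  field_simp

theorem continuousOn_add_speedHat (ρv : ℝ) :
    ContinuousOn (fun ρh => ρh + speedHat ρh ρv) (Ico |ρv| 1) :=
  continuousOn_id.add (continuousOn_speedHat ρv)

theorem strictMonoOn_add_speedHat (ρv : ℝ) :
    StrictMonoOn (fun ρh => ρh + speedHat ρh ρv) (Ico |ρv| 1) := by
  have hπ := pi_pos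
  have hsin : ∀ x ∈ Ioo |ρv| 1, sin (π * x) ≠ 0 := fun x hx =>
    (sin_pos_of_pos_of_lt_pi (by nlinarith [hx.1, abs_nonneg ρv]) (by nlinarith [hx.2])).ne'
  refine strictMonoOn_of_hasDerivWithinAt_pos (convex_Ico _ _) (continuousOn_add_speedHat ρv)
    (f' := fun x => 1 + (1 - cos (π * ρv) * cos (π * x)) / (2 * sin (π * x) ^ 2)) ?_ ?_
    <;> rw [interior_Ico]
  · exact fun x hx =>
      ((hasDerivAt_id x).add (hasDerivAt_speedHat ρv (hsin x hx))).hasDerivWithinAt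
  · intro x _
    have hprod : cos (π * ρv) * cos (π * x) ≤ 1 := (abs_le.1 (by
      rw [abs_mul]; exact mul_le_one₀ (abs_cos_le_one _) (abs_nonneg _) (abs_cos_le_one _))).2
    exact add_pos_of_pos_of_nonneg one_pos (div_nonneg (by linarith) (by positivity))

/-- For every fixed `ρ_v ∈ (-1,1)`, the map `ρ_h ↦ ρ_h + v̂(ρ_h,ρ_v)` is strictly
increasing on `[|ρ_v|, 1)` and is a bijection from `[|ρ_v|, 1)` onto `[|ρ_v|, ∞)`. -/
theorem stmt8 (ρv : ℝ) (hρv : ρv ∈ Set.Ioo (-1 : ℝ) 1) :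
    StrictMonoOn (fun ρh => ρh + speedHat ρh ρv) (Set.Ico |ρv| 1) ∧
    Set.BijOn (fun ρh => ρh + speedHat ρh ρv) (Set.Ico |ρv| 1) (Set.Ici |ρv|) := by
  have hv : |ρv| < 1 := abs_lt.2 hρv
  have hmono := strictMonoOn_add_speedHat ρv
  refine ⟨hmono, fun x hx => ?_, hmono.injOn, ?_⟩
  · exact le_add_of_le_of_nonneg hx.1 (speedHat_nonneg (Ico_subset_Icc_self hx))
  · have htop : Tendsto (fun ρh => ρh + speedHat ρh ρv) (𝓝[<] 1) atTop :=
      tendsto_nhdsWithin_of_tendsto_nhds tendsto_id |>.add_atTop (tendsto_speedHat_nhdsLT_one hv)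
    simpa [speedHat_abs_self] using
      (continuousOn_add_speedHat ρv).surjOn_Ici_of_tendsto_nhdsLT hv htop
end
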